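/- The map δ_{1,1} : 𝒲 → 𝓕_1 ⊗ 𝓕_1 defined by δ_{1,1}(L_n) = Σ_{i=1}^{n} i(n-i) v_i ⊗ w_{n-i} for n ≥ 1, δ_{1,1}(L_0) = 0, and δ_{1,1}(L_n) = -Σ_{i=-1}^{n} i(n-i) v_i ⊗ w_{n-i} for n ≤ -1, is a 1-cocycle of the Witt algebra. -/

import Mathlib

/-- The action of the Witt basis element `L m` on `𝓕_α ⊗ 𝓕_β`, realized on
`(ℤ × ℤ) →₀ ℂ` with basis `v_i ⊗ w_j ↦ single (i, j) 1`:
`L_m · (v_i ⊗ w_j) = -(i + αm) v_{m+i} ⊗ w_j - (j + βm) v_i ⊗ w_{m+j}`. -/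
noncomputable def tact (α β : ℂ) (m : ℤ) : ((ℤ × ℤ) →₀ ℂ) →ₗ[ℂ] ((ℤ × ℤ) →₀ ℂ) :=
  Finsupp.lsum ℂ fun p => LinearMap.toSpanSingleton ℂ ((ℤ × ℤ) →₀ ℂ)
    ((-((p.1 : ℂ) + α * m)) • Finsupp.single (m + p.1, p.2) (1 : ℂ)
      + (-((p.2 : ℂ) + β * m)) • Finsupp.single (p.1, m + p.2) (1 : ℂ))

/-- A family `d n = d(L_n)` is a 1-cocycle of the Witt algebra with
coefficients in `𝓕_α ⊗ 𝓕_β`: `d([L_m, L_n]) = L_m · d(L_n) - L_n · d(L_m)`. -/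
def IsCocycle (α β : ℂ) (d : ℤ → ((ℤ × ℤ) →₀ ℂ)) : Prop :=
  ∀ m n : ℤ, ((m - n : ℤ) : ℂ) • d (m + n) = tact α β m (d n) - tact α β n (d m)

/-- `d` is a 1-coboundary: `d(L_n) = L_n · u` for a fixed `u` in the module. -/
def IsCoboundary (α β : ℂ) (d : ℤ → ((ℤ × ℤ) →₀ ℂ)) : Prop :=
  ∃ u : (ℤ × ℤ) →₀ ℂ, ∀ n : ℤ, d n = tact α β n u

/-- The map `δ_{1,1} : 𝒲 → 𝓕_1 ⊗ 𝓕_1`. -/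
noncomputable def d11 (n : ℤ) : (ℤ × ℤ) →₀ ℂ :=
  if 1 ≤ n then
    ∑ i ∈ Finset.Icc (1 : ℤ) n, ((i : ℂ) * ((n : ℂ) - i)) • Finsupp.single (i, n - i) (1 : ℂ)
  else if n = 0 then 0
  else - ∑ i ∈ Finset.Icc n (-1 : ℤ),
    ((i : ℂ) * ((n : ℂ) - i)) • Finsupp.single (i, n - i) (1 : ℂ)

/-!
The coefficient of `v_a ⊗ w_{n-a}` in `δ_{1,1}(L_n)` is `a (n - a) (H a - H (a - n))`, where `H` is
the indicator of the positive integers. For any `φ : ℤ → ℂ` this is the coefficient of `L_n · u`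
for the formal infinite sum `u = -∑ₐ a φ(a) v_a ⊗ w_{-a}`, so such families are formal coboundaries,
and the cocycle identity holds coefficientwise as a polynomial identity in the values of `φ`.
-/

theorem tact_apply (α β : ℂ) (m : ℤ) (x : (ℤ × ℤ) →₀ ℂ) (a b : ℤ) :
    tact α β m x (a, b) =
      -(((a - m : ℤ) : ℂ) + α * m) * x (a - m, b) - (((b - m : ℤ) : ℂ) + β * m) * x (a, b - m) := by
  induction x using Finsupp.induction_linear with
  | zero => simp
  | add f g hf hg => simp only [map_add, Finsupp.add_apply, hf, hg]; ring
  | single p c =>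
    obtain ⟨i, j⟩ := p
    have hi : m + i = a ↔ i = a - m := by omega
    have hj : m + j = b ↔ j = b - m := by omega
    simp only [tact, Finsupp.lsum_single, LinearMap.toSpanSingleton_apply, Finsupp.add_apply,
      Finsupp.smul_apply, Finsupp.single_apply, Prod.mk.injEq, smul_eq_mul, hi, hj]
    split_ifs with h₁ h₂ h₃
    · obtain rfl : m = 0 := by omega
      obtain ⟨rfl, rfl⟩ := h₂
      push_cast; ring
    · obtain ⟨rfl, rfl⟩ := h₁
      push_cast; ring
    · obtain ⟨rfl, rfl⟩ := h₃
      push_cast; ring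
    · ring

theorem isCocycle_one_one_of_apply (φ : ℤ → ℂ) (d : ℤ → (ℤ × ℤ) →₀ ℂ)
    (hd : ∀ n a b, d n (a, b) = if a + b = n then (a : ℂ) * (n - a) * (φ a - φ (a - n)) else 0) :
    IsCocycle 1 1 d := by
  intro m n
  ext ⟨a, b⟩
  simp only [Finsupp.smul_apply, Finsupp.sub_apply, tact_apply, hd, smul_eq_mul,
    show a - m - n = a - (m + n) by ring, show a - n - m = a - (m + n) by ring]
  by_cases hab : a + b = m + n
  · obtain rfl : b = m + n - a := by omega
    split_ifs <;> first | omega | (push_cast; ring1)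
  · split_ifs <;> first | omega | ring1

theorem Finsupp.sum_smul_single_antidiagonal_apply {R : Type*} [Semiring R] (s : Finset ℤ)
    (f : ℤ → R) (n a b : ℤ) :
    (∑ i ∈ s, f i • Finsupp.single (i, n - i) (1 : R)) (a, b) =
      if a + b = n ∧ a ∈ s then f a else 0 := by
  have hab : ∀ i, (i = a ∧ n - i = b) ↔ (a = i ∧ a + b = n) := by omega
  simp only [Finsupp.finsetSum_apply, Finsupp.smul_apply, Finsupp.single_apply, Prod.mk.injEq,
    hab, smul_eq_mul, mul_ite, mul_one, mul_zero]
  by_cases h : a + b = n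
  · simp [h, Finset.sum_ite_eq]
  · simp [h]

theorem d11_apply (n a b : ℤ) :
    d11 n (a, b) = if a + b = n then
      (a : ℂ) * (n - a) * ((Set.Ioi 0).indicator 1 a - (Set.Ioi 0).indicator 1 (a - n)) else 0 := by
  unfold d11
  split_ifs <;>
    simp only [Finsupp.sum_smul_single_antidiagonal_apply, Finsupp.neg_apply, Finsupp.coe_zero,
      Pi.zero_apply, Set.indicator_apply, Set.mem_Ioi, Pi.one_apply, Finset.mem_Icc] <;>
    split_ifs <;> first | omega | ring1 |
      -- the remaining cases are the endpoints, where the weight `a (n - a)` vanishes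
      (obtain rfl | rfl : a = n ∨ a = 0 := by omega) <;> simp

/-- `δ_{1,1}` is a 1-cocycle of the Witt algebra with
coefficients in `𝓕_1 ⊗ 𝓕_1`. -/
theorem d11_isCocycle : IsCocycle 1 1 d11 :=
  isCocycle_one_one_of_apply _ d11 d11_apply
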